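/- Let ω : ℤ → [1,∞) be unbounded, nonincreasing, with ω(n) = 1 for all n ≥ 0. Then the natural inclusion Y_ω : L²_ω → ℓ²(ℤ) is a quasiaffinity (injective with dense range), for all f, g ∈ L²_ω one has lim_{k→∞} (S_ω^k f, S_ω^k g)_{L²_ω} = (Y_ω f, Y_ω g)_{ℓ²(ℤ)}, and the pair (Y_ω, U) is an isometric (and unitary) asymptote of S_ω. -/

import Mathlib

noncomputable section
set_option linter.unusedSectionVars false
open scoped ENNReal InnerProductSpace
open ContinuousLinearMap

/-- A bounded operator `V` is an isometry. -/
def IsIsometryOp {K : Type} [NormedAddCommGroup K] [InnerProductSpace ℂ K]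
    (V : K →L[ℂ] K) : Prop :=
  ∀ x, ‖V x‖ = ‖x‖

/-- A bounded operator `V` is unitary: an isometry onto. -/
def IsUnitaryOp {K : Type} [NormedAddCommGroup K] [InnerProductSpace ℂ K]
    (V : K →L[ℂ] K) : Prop :=
  (∀ x, ‖V x‖ = ‖x‖) ∧ Function.Surjective V

/-- `(X, V)` is an isometric asymptote of `T`: `V` is an isometry, `X` intertwines `T` with `V`
and has dense range, and the pair has the universal property with respect to every pair `(Y, W)`
with `W` an isometry on a Hilbert space and `Y T = W Y`. -/
def IsIsometricAsymptote {H : Type} [NormedAddCommGroup H] [InnerProductSpace ℂ H]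
    [CompleteSpace H] (T : H →L[ℂ] H)
    (K : Type) [NormedAddCommGroup K] [InnerProductSpace ℂ K] [CompleteSpace K]
    (X : H →L[ℂ] K) (V : K →L[ℂ] K) : Prop :=
  IsIsometryOp V ∧ DenseRange X ∧ X.comp T = V.comp X ∧
    ∀ (K' : Type) [NormedAddCommGroup K'] [InnerProductSpace ℂ K'] [CompleteSpace K']
      (W : K' →L[ℂ] K') (Y : H →L[ℂ] K'), IsIsometryOp W → Y.comp T = W.comp Y →
      ∃! Z : K →L[ℂ] K', Z.comp V = W.comp Z ∧ Y = Z.comp X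

/-- `(X, U)` is a unitary asymptote of `T`: `U` is unitary, `X` intertwines `T` with `U`,
the pair is minimal (`⋁_{n ≥ 0} U^{-n} X H = K`), and it has the universal property with
respect to every pair `(Y, W)` with `W` unitary on a Hilbert space and `Y T = W Y`. -/
def IsUnitaryAsymptote {H : Type} [NormedAddCommGroup H] [InnerProductSpace ℂ H]
    [CompleteSpace H] (T : H →L[ℂ] H)
    (K : Type) [NormedAddCommGroup K] [InnerProductSpace ℂ K] [CompleteSpace K]
    (X : H →L[ℂ] K) (U : K →L[ℂ] K) : Prop :=
  IsUnitaryOp U ∧ X.comp T = U.comp X ∧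
    (Submodule.span ℂ (⋃ n : ℕ, ⇑(U ^ n) ⁻¹' Set.range X)).topologicalClosure = ⊤ ∧
    ∀ (K' : Type) [NormedAddCommGroup K'] [InnerProductSpace ℂ K'] [CompleteSpace K']
      (W : K' →L[ℂ] K') (Y : H →L[ℂ] K'), IsUnitaryOp W → Y.comp T = W.comp Y →
      ∃! Z : K →L[ℂ] K', Z.comp U = W.comp Z ∧ Y = Z.comp X

lemma aux_ext_dense {H K K' : Type} [NormedAddCommGroup H] [NormedAddCommGroup K]
    [NormedAddCommGroup K'] [NormedSpace ℂ H] [NormedSpace ℂ K] [NormedSpace ℂ K']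
    (X : H →L[ℂ] K) (hd : DenseRange X) (Z₁ Z₂ : K →L[ℂ] K')
    (h : ∀ f, Z₁ (X f) = Z₂ (X f)) : Z₁ = Z₂ :=
  ContinuousLinearMap.coeFn_injective (hd.equalizer Z₁.continuous Z₂.continuous (funext h))

lemma aux_factor {H K K' : Type} [NormedAddCommGroup H] [NormedAddCommGroup K]
    [NormedAddCommGroup K'] [NormedSpace ℂ H] [NormedSpace ℂ K] [NormedSpace ℂ K']
    [CompleteSpace K']
    (X : H →L[ℂ] K) (hd : DenseRange X) (hinj : Function.Injective X)
    (Y : H →L[ℂ] K') (C : ℝ) (hC : ∀ f, ‖Y f‖ ≤ C * ‖X f‖) :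
    ∃ Z : K →L[ℂ] K', ∀ f, Z (X f) = Y f := by
  set p : Submodule ℂ K := LinearMap.range (X : H →ₗ[ℂ] K) with hp
  let e : H ≃ₗ[ℂ] p := LinearEquiv.ofInjective (X : H →ₗ[ℂ] K) hinj
  have hcoe : ∀ f : H, ((e f : p) : K) = X f := fun f => rfl
  let g₀ : p →ₗ[ℂ] K' := (Y : H →ₗ[ℂ] K') ∘ₗ (e.symm : p →ₗ[ℂ] H)
  have hbound : ∀ x : p, ‖g₀ x‖ ≤ max C 0 * ‖x‖ := by
    intro x
    have hx : ((x : K)) = X (e.symm x) := by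
      conv_lhs => rw [← e.apply_symm_apply x]
      exact hcoe _
    have : ‖g₀ x‖ ≤ C * ‖X (e.symm x)‖ := hC _
    calc ‖g₀ x‖ ≤ C * ‖X (e.symm x)‖ := this
      _ ≤ max C 0 * ‖X (e.symm x)‖ :=
        mul_le_mul_of_nonneg_right (le_max_left _ _) (norm_nonneg _)
      _ = max C 0 * ‖x‖ := by rw [← hx]; rfl
  let g : p →L[ℂ] K' := g₀.mkContinuous (max C 0) hbound
  have hiso : Isometry (p.subtypeL : p →L[ℂ] K) := by
    rw [Submodule.coe_subtypeL']
    exact isometry_subtype_coe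
  have hdense : DenseRange (p.subtypeL : p →L[ℂ] K) := by
    have : Set.range (p.subtypeL : p →L[ℂ] K) = (p : Set K) := by
      rw [Submodule.coe_subtypeL']; exact Subtype.range_coe
    rw [DenseRange, this]
    simpa [p, LinearMap.coe_range, DenseRange] using hd
  refine ⟨g.extend p.subtypeL, fun f => ?_⟩
  have h1 : X f = p.subtypeL (e f) := rfl
  rw [h1, ContinuousLinearMap.extend_eq (h_dense := hdense) (h_e := hiso.isUniformInducing)]
  show g₀ (e f) = Y f
  simp [g₀]

lemma lp_normsq (a : lp (fun _ : ℤ => ℂ) 2) : ‖a‖ ^ 2 = ∑' n : ℤ, ‖a n‖ ^ 2 := by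
  have h := lp.norm_rpow_eq_tsum (p := 2) (by norm_num) a
  have h2 : ((2 : ℝ≥0∞).toReal) = ((2 : ℕ) : ℝ) := by norm_num
  rw [h2] at h
  simpa [Real.rpow_natCast] using h

lemma lp_summable_sq (a : lp (fun _ : ℤ => ℂ) 2) : Summable (fun n : ℤ => ‖a n‖ ^ 2) := by
  have h := (lp.memℓp a).summable (p := 2) (by norm_num)
  have h2 : ((2 : ℝ≥0∞).toReal) = ((2 : ℕ) : ℝ) := by norm_num
  rw [h2] at h
  simpa [Real.rpow_natCast] using h

lemma lp_mem_of_sq (a : ℤ → ℂ) (h : Summable (fun n : ℤ => ‖a n‖ ^ 2)) :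
    Memℓp a 2 := by
  apply memℓp_gen
  have h2 : ((2 : ℝ≥0∞).toReal) = ((2 : ℕ) : ℝ) := by norm_num
  rw [h2]
  simpa [Real.rpow_natCast] using h

/-- For an unbounded, nonincreasing weight `ω : ℤ → [1, ∞)` with `ω(n) = 1` for `n ≥ 0`,
the natural inclusion `Y_ω : L²_ω → ℓ²(ℤ)` is a quasiaffinity, the asymptotic inner products
of iterates of the weighted bilateral shift `S_ω` are computed by `Y_ω`, and `(Y_ω, U)` is an
isometric (and unitary) asymptote of `S_ω`, where `U` is the bilateral shift on `ℓ²(ℤ)`. -/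
theorem inclusion_is_isometric_and_unitary_asymptote_of_weighted_shift
    (ω : ℤ → ℝ) (hω1 : ∀ n, 1 ≤ ω n)
    (hmono : ∀ m n : ℤ, m ≤ n → ω n ≤ ω m)
    (hunbdd : ∀ C : ℝ, ∃ n : ℤ, C < ω n)
    (hone : ∀ n : ℤ, 0 ≤ n → ω n = 1)
    -- `L` is (a model of) the weighted space `L²_ω`, described by its Fourier coefficients:
    (L : Type) [NormedAddCommGroup L] [InnerProductSpace ℂ L] [CompleteSpace L]
    (coef : L →ₗ[ℂ] (ℤ → ℂ)) (hcoefinj : Function.Injective coef)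
    (hnorm : ∀ f : L, ‖f‖ ^ 2 = ∑' n : ℤ, ‖coef f n‖ ^ 2 * ω n ^ 2)
    (hcoefsurj : ∀ a : ℤ → ℂ, Summable (fun n : ℤ => ‖a n‖ ^ 2 * ω n ^ 2) → ∃ f : L, coef f = a)
    -- the bilateral weighted shift `S_ω` on `L²_ω`:
    (Sw : L →L[ℂ] L) (hSw : ∀ (f : L) (n : ℤ), coef (Sw f) n = coef f (n - 1))
    -- the natural inclusion `Y_ω : L²_ω → ℓ²(ℤ)`:
    (Y : L →L[ℂ] lp (fun _ : ℤ => ℂ) 2) (hY : ∀ (f : L) (n : ℤ), Y f n = coef f n)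
    -- the bilateral shift `U` on `ℓ²(ℤ)`:
    (U : lp (fun _ : ℤ => ℂ) 2 →L[ℂ] lp (fun _ : ℤ => ℂ) 2)
    (hU : ∀ (a : lp (fun _ : ℤ => ℂ) 2) (n : ℤ), U a n = a (n - 1)) :
    Function.Injective Y ∧ DenseRange Y ∧
    (∀ f g : L, Filter.Tendsto (fun k : ℕ => ⟪(Sw ^ k) f, (Sw ^ k) g⟫_ℂ)
      Filter.atTop (nhds ⟪Y f, Y g⟫_ℂ)) ∧
    IsIsometricAsymptote Sw (lp (fun _ : ℤ => ℂ) 2) Y U ∧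
    IsUnitaryAsymptote Sw (lp (fun _ : ℤ => ℂ) 2) Y U := by
  classical
  -- summability of the weighted coefficient series
  have hsum : ∀ f : L, Summable (fun n : ℤ => ‖coef f n‖ ^ 2 * ω n ^ 2) := by
    intro f
    by_contra h
    have h0 : ‖f‖ ^ 2 = 0 := by rw [hnorm]; exact tsum_eq_zero_of_not_summable h
    have hf0 : f = 0 := norm_eq_zero.mp ((pow_eq_zero_iff (by norm_num : (2:ℕ) ≠ 0)).mp h0)
    apply h
    subst hf0
    have h2 : (fun n : ℤ => ‖coef (0 : L) n‖ ^ 2 * ω n ^ 2) = fun _ => (0 : ℝ) := by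
      funext n; simp
    rw [h2]
    exact summable_zero
  -- norm of Y f
  have hYnormsq : ∀ f : L, ‖Y f‖ ^ 2 = ∑' n : ℤ, ‖coef f n‖ ^ 2 := by
    intro f
    rw [lp_normsq]
    exact tsum_congr fun n => by rw [hY]
  -- coefficients of iterates
  have hcoefpow : ∀ (k : ℕ) (f : L) (n : ℤ), coef ((Sw ^ k) f) n = coef f (n - k) := by
    intro k
    induction k with
    | zero => intro f n; simp
    | succ k ih =>
      intro f n
      have hp : (Sw ^ (k + 1)) f = (Sw ^ k) (Sw f) := by rw [pow_succ]; rfl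
      rw [hp, ih, hSw]
      congr 1
      push_cast
      ring
  -- norm of iterates
  have hSknorm : ∀ (k : ℕ) (f : L),
      ‖(Sw ^ k) f‖ ^ 2 = ∑' n : ℤ, ‖coef f n‖ ^ 2 * ω (n + k) ^ 2 := by
    intro k f
    rw [hnorm]
    have h1 : ∀ n : ℤ, ‖coef ((Sw ^ k) f) n‖ ^ 2 * ω n ^ 2
        = ‖coef f (n - k)‖ ^ 2 * ω n ^ 2 := fun n => by rw [hcoefpow]
    rw [tsum_congr h1]
    have h2 := (Equiv.addRight (k : ℤ)).tsum_eq
      (fun n : ℤ => ‖coef f (n - k)‖ ^ 2 * ω n ^ 2)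
    rw [← h2]
    exact tsum_congr fun m => by simp
  -- Tendsto of squared norms
  have hSqT : ∀ f : L, Filter.Tendsto (fun k : ℕ => ‖(Sw ^ k) f‖ ^ 2)
      Filter.atTop (nhds (‖Y f‖ ^ 2)) := by
    intro f
    rw [hYnormsq f]
    have hfn : (fun k : ℕ => ‖(Sw ^ k) f‖ ^ 2)
        = fun k : ℕ => ∑' n : ℤ, ‖coef f n‖ ^ 2 * ω (n + k) ^ 2 :=
      funext fun k => hSknorm k f
    rw [hfn]
    apply tendsto_tsum_of_dominated_convergence (hsum f)
    · intro n
      apply Filter.Tendsto.congr' _ tendsto_const_nhds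
      filter_upwards [Filter.eventually_ge_atTop n.natAbs] with k hk
      have hk' : (n.natAbs : ℤ) ≤ (k : ℤ) := by exact_mod_cast hk
      have hnk : (0 : ℤ) ≤ n + k := by omega
      rw [hone _ hnk]
      ring
    · filter_upwards with k
      intro n
      have h1 : ω (n + k) ≤ ω n := hmono n (n + k) (le_add_of_nonneg_right (Int.natCast_nonneg k))
      have h0 : (0 : ℝ) ≤ ω (n + k) := le_trans zero_le_one (hω1 _)
      have h2 : ω (n + k) ^ 2 ≤ ω n ^ 2 := pow_le_pow_left₀ h0 h1 2
      rw [Real.norm_of_nonneg (by positivity)]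
      exact mul_le_mul_of_nonneg_left h2 (by positivity)
  -- Tendsto of norms
  have hT : ∀ f : L, Filter.Tendsto (fun k : ℕ => ‖(Sw ^ k) f‖)
      Filter.atTop (nhds ‖Y f‖) := by
    intro f
    have h := (hSqT f).sqrt
    have h1 : (fun k : ℕ => Real.sqrt (‖(Sw ^ k) f‖ ^ 2)) = fun k : ℕ => ‖(Sw ^ k) f‖ :=
      funext fun k => Real.sqrt_sq (norm_nonneg _)
    rw [h1, Real.sqrt_sq (norm_nonneg _)] at h
    exact h
  -- Tendsto of inner products, via polarization
  have hinner : ∀ f g : L, Filter.Tendsto (fun k : ℕ => ⟪(Sw ^ k) f, (Sw ^ k) g⟫_ℂ)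
      Filter.atTop (nhds ⟪Y f, Y g⟫_ℂ) := by
    intro f g
    have hpol : ∀ k : ℕ, ⟪(Sw ^ k) f, (Sw ^ k) g⟫_ℂ =
        ((‖(Sw ^ k) (f + g)‖ : ℂ) ^ 2 - (‖(Sw ^ k) (f - g)‖ : ℂ) ^ 2 +
          ((‖(Sw ^ k) (f - (RCLike.I : ℂ) • g)‖ : ℂ) ^ 2
            - (‖(Sw ^ k) (f + (RCLike.I : ℂ) • g)‖ : ℂ) ^ 2) * (RCLike.I : ℂ)) / 4 := by
      intro k
      rw [inner_eq_sum_norm_sq_div_four]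
      simp only [map_add, map_sub, map_smul]
      norm_cast
    have hpolY : ⟪Y f, Y g⟫_ℂ =
        ((‖Y (f + g)‖ : ℂ) ^ 2 - (‖Y (f - g)‖ : ℂ) ^ 2 +
          ((‖Y (f - (RCLike.I : ℂ) • g)‖ : ℂ) ^ 2
            - (‖Y (f + (RCLike.I : ℂ) • g)‖ : ℂ) ^ 2) * (RCLike.I : ℂ)) / 4 := by
      rw [inner_eq_sum_norm_sq_div_four]
      simp only [map_add, map_sub, map_smul]
      norm_cast
    rw [hpolY]
    refine Filter.Tendsto.congr (fun k => (hpol k).symm) ?_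
    have t1 := ((Complex.continuous_ofReal.tendsto _).comp (hT (f + g))).pow 2
    have t2 := ((Complex.continuous_ofReal.tendsto _).comp (hT (f - g))).pow 2
    have t3 := ((Complex.continuous_ofReal.tendsto _).comp
      (hT (f - (RCLike.I : ℂ) • g))).pow 2
    have t4 := ((Complex.continuous_ofReal.tendsto _).comp
      (hT (f + (RCLike.I : ℂ) • g))).pow 2
    exact (((t1.sub t2).add ((t3.sub t4).mul_const _)).div_const _)
  -- injectivity of Y
  have hYinj : Function.Injective Y := by
    intro f g h
    apply hcoefinj
    funext n
    rw [← hY, ← hY, h]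
  -- density of the range of Y
  have hYdense : DenseRange Y := by
    have hsingle : ∀ (i : ℤ) (c : ℂ), lp.single 2 i c ∈ Set.range Y := by
      intro i c
      set a : ℤ → ℂ := fun n => if n = i then c else 0 with ha
      have hsa : Summable (fun n : ℤ => ‖a n‖ ^ 2 * ω n ^ 2) := by
        apply summable_of_ne_finset_zero (s := {i})
        intro n hn
        simp only [Finset.mem_singleton] at hn
        simp [a, hn]
      obtain ⟨f, hf⟩ := hcoefsurj a hsa
      refine ⟨f, ?_⟩
      apply lp.ext
      funext n
      rw [hY, hf]
      by_cases hni : n = i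
      · subst hni; simp [a, lp.single_apply_self]
      · have hs := lp.single_apply_ne (E := fun _ : ℤ => ℂ) 2 i c hni
        simp [a, hni, hs]
    intro b
    have hb : HasSum (fun i : ℤ => lp.single 2 i (b i)) b :=
      lp.hasSum_single (by norm_num) b
    apply mem_closure_of_tendsto hb
    filter_upwards with s
    have : ∀ i ∈ s, lp.single 2 i (b i) ∈ LinearMap.range (Y : L →ₗ[ℂ] lp (fun _ : ℤ => ℂ) 2) :=
      fun i _ => hsingle i (b i)
    have hmem : (∑ i ∈ s, lp.single 2 i (b i)) ∈
        LinearMap.range (Y : L →ₗ[ℂ] lp (fun _ : ℤ => ℂ) 2) :=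
      Submodule.sum_mem _ this
    exact hmem
  -- intertwining
  have hint : Y.comp Sw = U.comp Y := by
    refine ContinuousLinearMap.ext fun f => ?_
    apply lp.ext
    funext n
    show (Y (Sw f)) n = (U (Y f)) n
    rw [hY, hSw, hU, hY]
  -- U is an isometry
  have hUiso : IsIsometryOp U := by
    intro a
    rw [lp.norm_eq_tsum_rpow (p := 2) (by norm_num),
      lp.norm_eq_tsum_rpow (p := 2) (by norm_num)]
    congr 1
    have h2 := (Equiv.subRight (1 : ℤ)).tsum_eq
      (fun m : ℤ => ‖a m‖ ^ ((2 : ℝ≥0∞).toReal))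
    rw [← h2]
    exact tsum_congr fun n => by rw [hU]; simp
  -- U is surjective
  have hUsurj : Function.Surjective U := by
    intro b
    have hb := lp_summable_sq b
    have hb2 : Summable (fun n : ℤ => ‖b (n + 1)‖ ^ 2) := by
      have h3 := ((Equiv.addRight (1 : ℤ)).summable_iff
        (f := fun m : ℤ => ‖b m‖ ^ 2)).mpr hb
      exact h3.congr fun n => by simp
    refine ⟨⟨fun n => b (n + 1), lp_mem_of_sq _ hb2⟩, ?_⟩
    apply lp.ext
    funext n
    rw [hU]
    show (b : ∀ _ : ℤ, ℂ) (n - 1 + 1) = (b : ∀ _ : ℤ, ℂ) n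
    have hn : n - 1 + 1 = n := by ring
    rw [hn]
  -- minimality
  have hmin : (Submodule.span ℂ
      (⋃ n : ℕ, ⇑(U ^ n) ⁻¹' Set.range ⇑Y)).topologicalClosure = ⊤ := by
    rw [eq_top_iff]
    intro x _
    have hsubset : Set.range ⇑Y ⊆
        ↑(Submodule.span ℂ (⋃ n : ℕ, ⇑(U ^ n) ⁻¹' Set.range ⇑Y)) := by
      refine subset_trans ?_ Submodule.subset_span
      intro y hy
      exact Set.mem_iUnion.mpr ⟨0, by simpa using hy⟩
    have hx : x ∈ closure (↑(Submodule.span ℂ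
        (⋃ n : ℕ, ⇑(U ^ n) ⁻¹' Set.range ⇑Y)) : Set (lp (fun _ : ℤ => ℂ) 2)) :=
      closure_mono hsubset (hYdense x)
    exact hx
  -- universal property
  have huniv : ∀ (K' : Type) [NormedAddCommGroup K'] [InnerProductSpace ℂ K']
      [CompleteSpace K'] (W : K' →L[ℂ] K') (Y' : L →L[ℂ] K'), IsIsometryOp W →
      Y'.comp Sw = W.comp Y' →
      ∃! Z : lp (fun _ : ℤ => ℂ) 2 →L[ℂ] K', Z.comp U = W.comp Z ∧ Y' = Z.comp Y := by
    intro K' _ _ _ W Y' hW hYW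
    have hYWap : ∀ f : L, Y' (Sw f) = W (Y' f) := fun f =>
      ContinuousLinearMap.ext_iff.mp hYW f
    have hWk : ∀ (k : ℕ) (x : K'), ‖(W ^ k) x‖ = ‖x‖ := by
      intro k
      induction k with
      | zero => intro x; simp
      | succ k ih =>
        intro x
        have hp : (W ^ (k + 1)) x = (W ^ k) (W x) := by rw [pow_succ]; rfl
        rw [hp, ih, hW]
    have hYWk : ∀ (k : ℕ) (f : L), Y' ((Sw ^ k) f) = (W ^ k) (Y' f) := by
      intro k
      induction k with
      | zero => intro f; simp
      | succ k ih =>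
        intro f
        have hp : (Sw ^ (k + 1)) f = (Sw ^ k) (Sw f) := by rw [pow_succ]; rfl
        have hp' : (W ^ (k + 1)) (Y' f) = (W ^ k) (W (Y' f)) := by rw [pow_succ]; rfl
        rw [hp, hp', ih (Sw f), hYWap f]
    have hbound : ∀ f : L, ‖Y' f‖ ≤ ‖Y'‖ * ‖Y f‖ := by
      intro f
      have hle : ∀ k : ℕ, ‖Y' f‖ ≤ ‖Y'‖ * ‖(Sw ^ k) f‖ := by
        intro k
        calc ‖Y' f‖ = ‖(W ^ k) (Y' f)‖ := (hWk k _).symm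
          _ = ‖Y' ((Sw ^ k) f)‖ := by rw [hYWk]
          _ ≤ ‖Y'‖ * ‖(Sw ^ k) f‖ := Y'.le_opNorm _
      exact ge_of_tendsto' ((hT f).const_mul ‖Y'‖) hle
    obtain ⟨Z, hZ⟩ := aux_factor Y hYdense hYinj Y' ‖Y'‖ hbound
    have hintap : ∀ f : L, Y (Sw f) = U (Y f) := fun f =>
      ContinuousLinearMap.ext_iff.mp hint f
    refine ⟨Z, ⟨?_, ?_⟩, ?_⟩
    · apply aux_ext_dense Y hYdense
      intro f
      show Z (U (Y f)) = W (Z (Y f))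
      calc Z (U (Y f)) = Z (Y (Sw f)) := by rw [← hintap]
        _ = Y' (Sw f) := hZ _
        _ = W (Y' f) := hYWap f
        _ = W (Z (Y f)) := by rw [hZ]
    · exact ContinuousLinearMap.ext fun f => (hZ f).symm
    · rintro Z₂ ⟨hZ₂c, hZ₂e⟩
      apply aux_ext_dense Y hYdense
      intro f
      have h2 : Y' f = Z₂ (Y f) := ContinuousLinearMap.ext_iff.mp hZ₂e f
      rw [hZ]
      exact h2.symm
  refine ⟨hYinj, hYdense, hinner, ⟨hUiso, hYdense, hint, huniv⟩,
    ⟨⟨hUiso, hUsurj⟩, hint, hmin, ?_⟩⟩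
  intro K' _ _ _ W Y' hWu hYW
  exact huniv K' W Y' hWu.1 hYW
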